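/- (Transversality.) Let φ_t be a symmetric completely Markov semigroup on a tracial von Neumann algebra (M,τ) and α_t: M → M̃ any dilation of φ_t by trace-preserving *-homomorphisms into a tracial von Neumann algebra M̃ ⊇ M, i.e. E_M(α_t(x)) = φ_t(x). Then for all x ∈ M and t > 0: ‖α_{2t}(x) − x‖₂² = 2‖α_t(x) − E_M(α_t(x))‖₂², and the equiconvergence estimates 2‖x − φ_{2t}(x)‖₂² ≤ ‖α_{2t}(x) − x‖₂² ≤ 4‖x‖₂·‖x − φ_t(x)‖₂ hold. -/
import Mathlib


open Filter Topology MeasureTheory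
open scoped ENNReal NNReal

noncomputable section

/-- A faithful tracial state on a unital complex C*-algebra.  This stands for a finite
von Neumann algebra `M` equipped with a faithful normal tracial state `τ`
(the `W*`-probability space `(M,τ)` of the paper). -/
structure TracialState (M : Type*) [NormedRing M] [StarRing M] [CStarRing M]
    [NormedAlgebra ℂ M] [StarModule ℂ M] [CompleteSpace M] where
  τ : M →ₗ[ℂ] ℂ
  τ_one : τ 1 = 1
  τ_tracial : ∀ a b : M, τ (a * b) = τ (b * a)
  τ_pos_re : ∀ a : M, 0 ≤ (τ (star a * a)).re
  τ_pos_im : ∀ a : M, (τ (star a * a)).im = 0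
  τ_star : ∀ a : M, τ (star a) = starRingEnd ℂ (τ a)
  τ_faithful : ∀ a : M, τ (star a * a) = 0 → a = 0

namespace TracialState

variable {M : Type*} [NormedRing M] [StarRing M] [CStarRing M]
  [NormedAlgebra ℂ M] [StarModule ℂ M] [CompleteSpace M]

/-- the `L²`-norm `‖x‖₂ = τ(x^*x)^{1/2}` associated to a trace. -/
def norm2 (ρ : TracialState M) (x : M) : ℝ := Real.sqrt (ρ.τ (star x * x)).re

end TracialState

namespace TracialState

variable {M : Type*} [NormedRing M] [StarRing M] [CStarRing M]
  [NormedAlgebra ℂ M] [StarModule ℂ M] [CompleteSpace M]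

/-- the real inner product `Re τ(a* b)` associated to a trace. -/
def ip (ρ : TracialState M) (a b : M) : ℝ := (ρ.τ (star a * b)).re

lemma ip_self_nonneg (ρ : TracialState M) (a : M) : 0 ≤ ρ.ip a a := ρ.τ_pos_re a

lemma norm2_nonneg (ρ : TracialState M) (a : M) : 0 ≤ ρ.norm2 a := Real.sqrt_nonneg _

lemma norm2_sq (ρ : TracialState M) (a : M) : ρ.norm2 a ^ 2 = ρ.ip a a :=
  Real.sq_sqrt (ρ.ip_self_nonneg a)

lemma ip_comm (ρ : TracialState M) (a b : M) : ρ.ip a b = ρ.ip b a := by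
  have h : ρ.τ (star b * a) = starRingEnd ℂ (ρ.τ (star a * b)) := by
    rw [← ρ.τ_star]
    congr 1
    rw [star_mul, star_star]
  unfold ip
  rw [h, Complex.conj_re]

lemma ip_add_left (ρ : TracialState M) (a b c : M) :
    ρ.ip (a + b) c = ρ.ip a c + ρ.ip b c := by
  unfold ip
  rw [star_add, add_mul, map_add, Complex.add_re]

lemma ip_add_right (ρ : TracialState M) (a b c : M) :
    ρ.ip a (b + c) = ρ.ip a b + ρ.ip a c := by
  unfold ip
  rw [mul_add, map_add, Complex.add_re]

lemma ip_sub_left (ρ : TracialState M) (a b c : M) :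
    ρ.ip (a - b) c = ρ.ip a c - ρ.ip b c := by
  unfold ip
  rw [star_sub, sub_mul, map_sub, Complex.sub_re]

lemma ip_sub_right (ρ : TracialState M) (a b c : M) :
    ρ.ip a (b - c) = ρ.ip a b - ρ.ip a c := by
  unfold ip
  rw [mul_sub, map_sub, Complex.sub_re]

lemma ip_smul_right (ρ : TracialState M) (r : ℝ) (a b : M) :
    ρ.ip a ((r : ℂ) • b) = r * ρ.ip a b := by
  unfold ip
  rw [mul_smul_comm, ρ.τ.map_smul, smul_eq_mul, Complex.re_ofReal_mul]

lemma ip_smul_left (ρ : TracialState M) (r : ℝ) (a b : M) :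
    ρ.ip ((r : ℂ) • a) b = r * ρ.ip a b := by
  unfold ip
  rw [star_smul, Complex.star_def, Complex.conj_ofReal]
  rw [smul_mul_assoc, ρ.τ.map_smul, smul_eq_mul, Complex.re_ofReal_mul]

lemma norm2_sub_sq (ρ : TracialState M) (a b : M) :
    ρ.norm2 (a - b) ^ 2 = ρ.ip a a - 2 * ρ.ip a b + ρ.ip b b := by
  rw [norm2_sq, ip_sub_left, ip_sub_right, ip_sub_right, ip_comm ρ b a]
  ring

/-- Cauchy–Schwarz for the trace inner product. -/
lemma ip_le_norm2_mul_norm2 (ρ : TracialState M) (a b : M) :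
    ρ.ip a b ≤ ρ.norm2 a * ρ.norm2 b := by
  have key : ∀ r : ℝ, 0 ≤ ρ.ip b b * (r * r) + (2 * ρ.ip a b) * r + ρ.ip a a := by
    intro r
    have h := ρ.ip_self_nonneg (a + (r : ℂ) • b)
    have e : ρ.ip (a + (r : ℂ) • b) (a + (r : ℂ) • b)
        = ρ.ip b b * (r * r) + (2 * ρ.ip a b) * r + ρ.ip a a := by
      rw [ip_add_left, ip_add_right, ip_add_right, ip_smul_right, ip_smul_left,
        ip_smul_left, ip_smul_right, ip_comm ρ b a]
      ring
    linarith [e ▸ h]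
  have hd : discrim (ρ.ip b b) (2 * ρ.ip a b) (ρ.ip a a) ≤ 0 := discrim_le_zero key
  rw [discrim] at hd
  have h2 : (ρ.ip a b) ^ 2 ≤ (ρ.norm2 a * ρ.norm2 b) ^ 2 := by
    have ha := ρ.norm2_sq a
    have hb := ρ.norm2_sq b
    nlinarith
  calc ρ.ip a b ≤ |ρ.ip a b| := le_abs_self _
    _ = Real.sqrt ((ρ.ip a b) ^ 2) := (Real.sqrt_sq_eq_abs _).symm
    _ ≤ Real.sqrt ((ρ.norm2 a * ρ.norm2 b) ^ 2) := Real.sqrt_le_sqrt h2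
    _ = ρ.norm2 a * ρ.norm2 b :=
        Real.sqrt_sq (mul_nonneg (ρ.norm2_nonneg a) (ρ.norm2_nonneg b))

/-- triangle inequality for the trace `L²`-norm. -/
lemma norm2_add_le (ρ : TracialState M) (a b : M) :
    ρ.norm2 (a + b) ≤ ρ.norm2 a + ρ.norm2 b := by
  have h : ρ.ip (a + b) (a + b) ≤ (ρ.norm2 a + ρ.norm2 b) ^ 2 := by
    have hcs := ρ.ip_le_norm2_mul_norm2 a b
    have ha := ρ.norm2_sq a
    have hb := ρ.norm2_sq b
    rw [ip_add_left, ip_add_right, ip_add_right, ip_comm ρ b a]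
    nlinarith
  calc ρ.norm2 (a + b) = Real.sqrt (ρ.ip (a + b) (a + b)) := rfl
    _ ≤ Real.sqrt ((ρ.norm2 a + ρ.norm2 b) ^ 2) := Real.sqrt_le_sqrt h
    _ = ρ.norm2 a + ρ.norm2 b :=
        Real.sqrt_sq (add_nonneg (ρ.norm2_nonneg a) (ρ.norm2_nonneg b))

end TracialState

section Statement14

variable {M N : Type*} [NormedRing M] [StarRing M] [CStarRing M]
  [NormedAlgebra ℂ M] [StarModule ℂ M] [CompleteSpace M]
  [NormedRing N] [StarRing N] [CStarRing N]
  [NormedAlgebra ℂ N] [StarModule ℂ N] [CompleteSpace N]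

/-- **Proposition (transversality).**  Let `φ_t` be a symmetric completely Markov
semigroup on a tracial von Neumann algebra `(M,τ)` and `α_t : M → Ñ` any dilation of
`φ_t` by trace-preserving *-homomorphisms into a tracial von Neumann algebra `Ñ ⊇ M`
(i.e. `E_M(α_t(x)) = φ_t(x)`, where `E_M` is the `τ`-preserving conditional expectation
onto `M`).  Then for all `x ∈ M` and `t ≥ 0`:
`‖α_{2t}(x) − x‖₂² = 2‖α_t(x) − E_M(α_t(x))‖₂²`,
and the equiconvergence estimates
`2‖x − φ_{2t}(x)‖₂² ≤ ‖α_{2t}(x) − x‖₂² ≤ 4‖x‖₂‖x − φ_t(x)‖₂` hold. -/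
theorem dilation_transversality
    (ρ : TracialState M) (ρN : TracialState N)
    -- the embedding `M ⊆ Ñ`, trace preserving
    (ι : M →⋆ₐ[ℂ] N) (hι : ∀ x : M, ρN.τ (ι x) = ρ.τ x)
    -- the `τ`-preserving conditional expectation of `Ñ` onto `M`
    (EM : N →ₗ[ℂ] M) (hEMι : ∀ x : M, EM (ι x) = x)
    (hEM_adj : ∀ (m : M) (y : N), ρN.τ (star (ι m) * y) = ρ.τ (star m * EM y))
    -- the symmetric completely Markov semigroup `φ`
    (φ : ℝ → M →ₗ[ℂ] M)
    (hφ0 : ∀ x, φ 0 x = x)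
    (hφsem : ∀ s t : ℝ, 0 ≤ s → 0 ≤ t → ∀ x, φ (s + t) x = φ s (φ t x))
    (hφcontract : ∀ t, 0 ≤ t → ∀ x, ‖φ t x‖ ≤ ‖x‖)
    (hφcp : ∀ t, 0 ≤ t → ∀ (n : ℕ) (a b : Fin n → M),
      0 ≤ (ρ.τ (∑ i, ∑ j, star (b i) * φ t (star (a i) * a j) * b j)).re)
    (hφsymm : ∀ t, 0 ≤ t → ∀ a b : M, ρ.τ (φ t a * b) = ρ.τ (a * φ t b))
    (hφ2 : ∀ t, 0 ≤ t → ∀ x, ρ.norm2 (φ t x) ≤ ρ.norm2 x)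
    -- the dilation `α` of `φ`
    (α : ℝ → (M →⋆ₐ[ℂ] N))
    (hαtrace : ∀ t, 0 ≤ t → ∀ x, ρN.τ (α t x) = ρ.τ x)
    (hα0 : ∀ x, α 0 x = ι x)
    (hdil : ∀ t, 0 ≤ t → ∀ x, EM (α t x) = φ t x)
    (t : ℝ) (ht : 0 ≤ t) (x : M) :
    ρN.norm2 (α (2 * t) x - ι x) ^ 2
        = 2 * ρN.norm2 (α t x - ι (EM (α t x))) ^ 2 ∧
      2 * ρ.norm2 (x - φ (2 * t) x) ^ 2 ≤ ρN.norm2 (α (2 * t) x - ι x) ^ 2 ∧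
      ρN.norm2 (α (2 * t) x - ι x) ^ 2 ≤ 4 * ρ.norm2 x * ρ.norm2 (x - φ t x) := by
  have ht2 : (0:ℝ) ≤ 2 * t := by linarith
  -- extensionality from faithfulness
  have hext : ∀ a b : M, (∀ m : M, ρ.τ (star m * a) = ρ.τ (star m * b)) → a = b := by
    intro a b h
    have h0 : ρ.τ (star (a - b) * (a - b)) = 0 := by
      rw [mul_sub, map_sub, h (a - b), sub_self]
    have := ρ.τ_faithful _ h0
    exact sub_eq_zero.mp this
  -- the conditional expectation is star-preserving
  have hEMstar : ∀ y : N, EM (star y) = star (EM y) := by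
    intro y
    apply hext
    intro m
    calc ρ.τ (star m * EM (star y)) = ρN.τ (star (ι m) * star y) := (hEM_adj m _).symm
      _ = ρN.τ (star (y * ι m)) := by rw [star_mul]
      _ = starRingEnd ℂ (ρN.τ (y * ι m)) := ρN.τ_star _
      _ = starRingEnd ℂ (ρN.τ (ι m * y)) := by rw [ρN.τ_tracial]
      _ = starRingEnd ℂ (ρN.τ (star (ι (star m)) * y)) := by rw [map_star, star_star]
      _ = starRingEnd ℂ (ρ.τ (star (star m) * EM y)) := by rw [hEM_adj]
      _ = starRingEnd ℂ (ρ.τ (m * EM y)) := by rw [star_star]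
      _ = ρ.τ (star (m * EM y)) := (ρ.τ_star _).symm
      _ = ρ.τ (star (EM y) * star m) := by rw [star_mul]
      _ = ρ.τ (star m * star (EM y)) := ρ.τ_tracial _ _
  -- hence the semigroup is star-preserving
  have hφstar : ∀ s, 0 ≤ s → ∀ y : M, φ s (star y) = star (φ s y) := by
    intro s hs y
    rw [← hdil s hs, ← hdil s hs, map_star (α s), hEMstar]
  -- trace-preserving *-homomorphisms preserve the inner product
  have hα_ip : ∀ s, 0 ≤ s → ∀ a b : M, ρN.ip (α s a) (α s b) = ρ.ip a b := by
    intro s hs a b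
    show (ρN.τ (star (α s a) * α s b)).re = _
    rw [← map_star (α s), ← map_mul (α s), hαtrace s hs]
    rfl
  have hι_ip : ∀ a b : M, ρN.ip (ι a) (ι b) = ρ.ip a b := by
    intro a b
    show (ρN.τ (star (ι a) * ι b)).re = _
    rw [← map_star ι, ← map_mul ι, hι]
    rfl
  have hadj : ∀ (m : M) (y : N), ρN.ip (ι m) y = ρ.ip m (EM y) := by
    intro m y
    show (ρN.τ (star (ι m) * y)).re = (ρ.τ (star m * EM y)).re
    rw [hEM_adj]
  -- semigroup law
  have hq' : φ (2 * t) x = φ t (φ t x) := by rw [two_mul, hφsem t t ht ht]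
  -- key identity: ⟨x, φ_{2t} x⟩ = ⟨φ_t x, φ_t x⟩
  have hxq : ρ.τ (star x * φ (2 * t) x) = ρ.τ (star (φ t x) * φ t x) := by
    rw [hq', ρ.τ_tracial, hφsymm t ht (φ t x) (star x), hφstar t ht x, ρ.τ_tracial]
  have hxq' : ρ.ip x (φ (2 * t) x) = ρ.ip (φ t x) (φ t x) := congrArg Complex.re hxq
  -- left-hand side computation
  have hK1 : ρN.norm2 (α (2 * t) x - ι x) ^ 2
      = 2 * ρ.ip x x - 2 * ρ.ip x (φ (2 * t) x) := by
    rw [TracialState.norm2_sub_sq, hα_ip (2 * t) ht2, hι_ip,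
      TracialState.ip_comm ρN (α (2 * t) x) (ι x), hadj, hdil (2 * t) ht2]
    ring
  -- transversal term computation
  have hK2 : ρN.norm2 (α t x - ι (EM (α t x))) ^ 2
      = ρ.ip x x - ρ.ip (φ t x) (φ t x) := by
    rw [hdil t ht, TracialState.norm2_sub_sq, hα_ip t ht, hι_ip,
      TracialState.ip_comm ρN (α t x) (ι (φ t x)), hadj, hdil t ht]
    ring
  -- contraction in L²: ‖φ_{2t} x‖² ≤ ‖φ_t x‖²
  have hqq : ρ.ip (φ (2 * t) x) (φ (2 * t) x) ≤ ρ.ip (φ t x) (φ t x) := by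
    have h := hφ2 t ht (φ t x)
    have h2 := pow_le_pow_left₀ (TracialState.norm2_nonneg ρ _) h 2
    rw [TracialState.norm2_sq, TracialState.norm2_sq] at h2
    rwa [hq']
  refine ⟨by rw [hK1, hK2, hxq']; ring, ?_, ?_⟩
  · -- lower equiconvergence bound
    have hnq : ρ.norm2 (x - φ (2 * t) x) ^ 2
        = ρ.ip x x - 2 * ρ.ip (φ t x) (φ t x)
            + ρ.ip (φ (2 * t) x) (φ (2 * t) x) := by
      rw [TracialState.norm2_sub_sq, hxq']
    rw [hK1, hnq]
    linarith [hqq, hxq']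
  · -- upper equiconvergence bound
    have hcs := TracialState.ip_le_norm2_mul_norm2 ρ x (x - φ (2 * t) x)
    have hsplit : x - φ (2 * t) x = (x - φ t x) + φ t (x - φ t x) := by
      rw [map_sub, ← hq']
      abel
    have htri := TracialState.norm2_add_le ρ (x - φ t x) (φ t (x - φ t x))
    have hc := hφ2 t ht (x - φ t x)
    have hb : ρ.norm2 (x - φ (2 * t) x) ≤ 2 * ρ.norm2 (x - φ t x) := by
      rw [hsplit]
      linarith
    have hipsub : ρ.ip x (x - φ (2 * t) x)
        = ρ.ip x x - ρ.ip x (φ (2 * t) x) := TracialState.ip_sub_right ρ _ _ _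
    have hx0 := TracialState.norm2_nonneg ρ x
    have hxp0 := TracialState.norm2_nonneg ρ (x - φ t x)
    rw [hK1]
    nlinarith [hcs, hb, hx0, hxp0, hipsub]

end Statement14
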